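/- Let A be an abelian category, (T, F) a torsion pair, and V an object with T = Gen(V) = Pres(V) and T ⊆ Ker(Ext^1_A(V,−)). If M is an object admitting an exact sequence 0 → M → T_1 → T_2 → 0 with T_1, T_2 ∈ T, and Ext^1_A(V^{(I)}, M) = 0 for all sets I, then M ∈ T. (Proof via pullback: choose an epimorphism q : V^{(α)} → T_2 with kernel in T, form the pullback Z of T_1 → T_2 ← V^{(α)}; then Z ∈ T and the sequence 0 → M → Z → V^{(α)} → 0 splits, exhibiting M as a direct summand of Z.) -/

import Mathlib

open CategoryTheory CategoryTheory.Limits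

universe v u

namespace Paper

/-- A torsion pair `(T, F)` in an abelian category. -/
structure TorsionPair {C : Type u} [Category.{v} C] [Abelian C] (T F : C → Prop) : Prop where
  isoClosed_torsion : ∀ {X Y : C}, (X ≅ Y) → T X → T Y
  isoClosed_free : ∀ {X Y : C}, (X ≅ Y) → F X → F Y
  hom_eq_zero : ∀ {X Y : C}, T X → F Y → ∀ f : X ⟶ Y, f = 0
  exists_ses : ∀ X : C, ∃ (TX FX : C) (i : TX ⟶ X) (p : X ⟶ FX) (w : i ≫ p = 0),
      T TX ∧ F FX ∧ (ShortComplex.mk i p w).ShortExact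

variable {C : Type u} [Category.{v} C] [Abelian C]

/-- `X` is `V`-generated. -/
def Gen (V : C) [∀ I : Type v, HasCoproduct (fun _ : I => V)] (X : C) : Prop :=
  ∃ (I : Type v) (p : (∐ (fun _ : I => V)) ⟶ X), Epi p

/-- `X` is `V`-presented. -/
def Pres (V : C) [∀ I : Type v, HasCoproduct (fun _ : I => V)] (X : C) : Prop :=
  ∃ (I J : Type v) (g : (∐ (fun _ : J => V)) ⟶ (∐ (fun _ : I => V)))
    (p : (∐ (fun _ : I => V)) ⟶ X) (w : g ≫ p = 0),
      Epi p ∧ (ShortComplex.mk g p w).Exact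

/-- `Ext¹(W, X) = 0`: every short exact sequence `0 → X → E → W → 0` splits. -/
def ext1Zero (W X : C) : Prop :=
  ∀ (E : C) (a : X ⟶ E) (b : E ⟶ W) (w : a ≫ b = 0),
    (ShortComplex.mk a b w).ShortExact → ∃ s : W ⟶ E, s ≫ b = 𝟙 W

/-!
Since `T = Pres V`, there is an epimorphism `q : V^(I) → T₂` whose kernel is a quotient of some
`V^(J)`, hence torsion. In the pullback `Z` of `p` and `q` the kernel of `Z → T₁` is `ker q` and
the kernel of `Z → V^(I)` is `M`. So `Z` is torsion as an extension of torsion objects, while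
`0 → M → Z → V^(I) → 0` splits by the hypothesis on `M`; thus `M` is a quotient of `Z`.
-/

namespace TorsionPair

variable {T F : C → Prop}

lemma mem_torsion_of_forall_hom_eq_zero (htp : TorsionPair T F) {X : C}
    (h : ∀ Y : C, F Y → ∀ f : X ⟶ Y, f = 0) : T X := by
  obtain ⟨TX, FX, i, p, w, hT, hF, hse⟩ := htp.exists_ses X
  have : Mono i := hse.mono_f
  have : Epi i := hse.exact.epi_f (h FX hF p)
  have : IsIso i := isIso_of_mono_of_epi i
  exact htp.isoClosed_torsion (asIso i) hT

lemma mem_torsion_of_epi (htp : TorsionPair T F) {X Y : C} (π : X ⟶ Y) [Epi π] (hX : T X) :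
    T Y :=
  htp.mem_torsion_of_forall_hom_eq_zero fun _ hZ f =>
    (cancel_epi π).mp (by rw [comp_zero]; exact htp.hom_eq_zero hX hZ _)

lemma mem_torsion_of_shortExact (htp : TorsionPair T F) {X₁ X₂ X₃ : C} {f : X₁ ⟶ X₂}
    {g : X₂ ⟶ X₃} {w : f ≫ g = 0} (hse : (ShortComplex.mk f g w).ShortExact) (h₁ : T X₁)
    (h₃ : T X₃) : T X₂ :=
  htp.mem_torsion_of_forall_hom_eq_zero fun _ hY φ => by
    obtain ⟨ψ, hψ⟩ := CokernelCofork.IsColimit.desc' hse.gIsCokernel φ (htp.hom_eq_zero h₁ hY _)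
    rw [← hψ, htp.hom_eq_zero h₃ hY ψ, comp_zero]

end TorsionPair

lemma gen_kernel_of_exact {V X₂ X₃ : C} [∀ I : Type v, HasCoproduct (fun _ : I => V)]
    {J : Type v} {g : ∐ (fun _ : J => V) ⟶ X₂} {q : X₂ ⟶ X₃} {w : g ≫ q = 0}
    (h : (ShortComplex.mk g q w).Exact) : Gen V (kernel q) :=
  ⟨J, kernel.lift q g w, h.epi_kernelLift⟩

lemma shortExact_of_isPullback {Z X₁ X₂ K B : C} {fst : Z ⟶ X₁} {snd : Z ⟶ B}
    {p : X₁ ⟶ X₂} {q : B ⟶ X₂} (sq : IsPullback fst snd p q) {i : K ⟶ X₁} {w : i ≫ p = 0}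
    (hse : (ShortComplex.mk i p w).ShortExact) :
    (ShortComplex.mk (sq.lift i 0 (by simp [w])) snd (sq.lift_snd _ _ _)).ShortExact := by
  have : Mono i := hse.mono_f
  have : Epi p := hse.epi_g
  set j := sq.lift i 0 (by simp [w])
  have hj : j ≫ fst = i := sq.lift_fst _ _ _
  have hj_mono : Mono j := mono_of_mono_fac hj
  have hjker : IsLimit (KernelFork.ofι j (sq.lift_snd _ _ _)) :=
    KernelFork.IsLimit.ofι' j _ fun t ht => by
      have ht₁ : (t ≫ fst) ≫ p = 0 := by
        rw [Category.assoc, sq.w, ← Category.assoc, ht, zero_comp]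
      refine ⟨hse.exact.lift (t ≫ fst) ht₁, sq.hom_ext ?_ ?_⟩
      · rw [Category.assoc, hj]
        exact hse.exact.lift_f _ _
      · rw [Category.assoc, sq.lift_snd, comp_zero, ht]
  exact
    { exact := ShortComplex.exact_of_f_is_kernel _ hjker
      mono_f := hj_mono
      epi_g := Abelian.epi_snd_of_isLimit p q sq.isLimit }

lemma exists_retraction_of_ext1Zero {X E W : C} (a : X ⟶ E) (b : E ⟶ W) (w : a ≫ b = 0)
    (hse : (ShortComplex.mk a b w).ShortExact) (hext : ext1Zero W X) :
    ∃ r : E ⟶ X, a ≫ r = 𝟙 X := by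
  obtain ⟨s, hs⟩ := hext E a b w hse
  let σ := ShortComplex.Splitting.ofExactOfSection _ hse.exact s hs hse.mono_f
  exact ⟨σ.r, σ.f_r⟩

/-- let `(T, F)` be a torsion pair with `T = Gen(V) = Pres(V)` and
`T ⊆ Ker Ext¹(V,−)`.  If `M` admits a short exact sequence `0 → M → T₁ → T₂ → 0` with
`T₁, T₂ ∈ T` and `Ext¹(V^{(I)}, M) = 0` for all sets `I`, then `M ∈ T`. -/
theorem statement18 {T F : C → Prop} (htp : TorsionPair T F)
    (V : C) [∀ I : Type v, HasCoproduct (fun _ : I => V)]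
    (hTgen : ∀ X : C, T X ↔ Gen V X) (hTpres : ∀ X : C, T X ↔ Pres V X)
    (hText : ∀ X : C, T X → ext1Zero V X)
    (M T₁ T₂ : C) (i : M ⟶ T₁) (p : T₁ ⟶ T₂) (w : i ≫ p = 0)
    (hse : (ShortComplex.mk i p w).ShortExact) (h₁ : T T₁) (h₂ : T T₂)
    (hM : ∀ I : Type v, ext1Zero (∐ (fun _ : I => V)) M) :
    T M := by
  obtain ⟨I, J, g, q, wq, hq, hexact⟩ := (hTpres T₂).mp h₂
  have hker : (ShortComplex.mk (kernel.ι q) q (kernel.condition q)).ShortExact :=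
    { exact := ShortComplex.exact_of_f_is_kernel _ (kernelIsKernel q)
      epi_g := hq }
  have sq := IsPullback.of_hasPullback p q
  have hZ : T (pullback p q) := htp.mem_torsion_of_shortExact
    (shortExact_of_isPullback sq.flip hker) ((hTgen _).mpr (gen_kernel_of_exact hexact)) h₁
  obtain ⟨r, hr⟩ := exists_retraction_of_ext1Zero _ _ _ (shortExact_of_isPullback sq hse) (hM I)
  have : Epi r := epi_of_epi_fac hr
  exact htp.mem_torsion_of_epi r hZ

end Paper
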